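/- Let α0, α1 be complex constants, U an open subset of ℂ with 0 ∉ U, and let u : U → ℂ be three times differentiable with u'(t) ≠ 0 for all t ∈ U, satisfying equation (E) on U. Define x := u, y := u', z := (u'' − ((2α1−1)u + α0)/t²)/u'. Then the triple (x, y, z) satisfies system (S) on U with parameters (α0, α1). -/

import Mathlib

/-- The triple `(x, y, z)` satisfies the polynomial system (S) on `U` with
parameters `(α0, α1)`:
`x′ = y`, `y′ = yz + ((2α1−1)x + α0)/t²`,
`z′ = −z²/2 − 4x/t − 4y − 2z/t + (2α1−1)(2α1−3)/(2t²) + 2/t`. -/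
def SysS (α0 α1 : ℂ) (U : Set ℂ) (x y z : ℂ → ℂ) : Prop :=
  ∀ t ∈ U,
    HasDerivAt x (y t) t ∧
    HasDerivAt y (y t * z t + ((2 * α1 - 1) * x t + α0) / t ^ 2) t ∧
    HasDerivAt z (-(z t) ^ 2 / 2 - 4 * x t / t - 4 * y t - 2 * z t / t
      + (2 * α1 - 1) * (2 * α1 - 3) / (2 * t ^ 2) + 2 / t) t

/-! The first two equations of (S) only restate the definitions of `y` and `z`. For the third,
the quotient rule expresses `z'` through `u, u', u'', u'''`; eliminating `u'''` by (E) leaves a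
rational identity in `t, u, u', u''`. -/

theorem HasDerivAt.div_sq {𝕜 : Type*} [NontriviallyNormedField 𝕜] {f : 𝕜 → 𝕜} {f' t : 𝕜}
    (hf : HasDerivAt f f' t) (ht : t ≠ 0) :
    HasDerivAt (fun s => f s / s ^ 2) (f' / t ^ 2 - 2 * f t / t ^ 3) t := by
  refine (hf.div (hasDerivAt_pow 2 t) (pow_ne_zero 2 ht)).congr_deriv ?_
  field_simp
  push_cast
  ring

theorem sysS_z_rhs_of_eqE {K : Type*} [Field K] [NeZero (2 : K)] {α0 α1 t u0 u1 u2 u3 z : K}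
    (ht : t ≠ 0) (hu1 : u1 ≠ 0)
    (hE : u3 = (t ^ 2 * u2 - (2 * α1 - 1) * u0 - α0) * (t ^ 2 * u2 + (2 * α1 - 1) * u0 + α0) /
              (2 * t ^ 4 * u1)
          - 4 * u1 * (u0 + t * u1) / t
          + ((4 * t + (2 * α1 - 1) ^ 2) / (2 * t ^ 2)) * u1
          - (2 / t) * u2)
    (hz : z = (u2 - ((2 * α1 - 1) * u0 + α0) / t ^ 2) / u1) :
    ((u3 - ((2 * α1 - 1) * u1 / t ^ 2 - 2 * ((2 * α1 - 1) * u0 + α0) / t ^ 3)) * u1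
        - (u2 - ((2 * α1 - 1) * u0 + α0) / t ^ 2) * u2) / u1 ^ 2 =
      -z ^ 2 / 2 - 4 * u0 / t - 4 * u1 - 2 * z / t
        + (2 * α1 - 1) * (2 * α1 - 3) / (2 * t ^ 2) + 2 / t := by
  subst hE hz
  field_simp
  ring

theorem eqE_to_sysS_general
    (α0 α1 : ℂ) (U : Set ℂ) (h0 : (0 : ℂ) ∉ U)
    (u : ℂ → ℂ)
    (hu1 : ∀ t ∈ U, DifferentiableAt ℂ u t)
    (hu2 : ∀ t ∈ U, DifferentiableAt ℂ (deriv u) t)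
    (hu3 : ∀ t ∈ U, DifferentiableAt ℂ (deriv (deriv u)) t)
    (hne : ∀ t ∈ U, deriv u t ≠ 0)
    (hE : ∀ t ∈ U,
      deriv (deriv (deriv u)) t =
        (t ^ 2 * deriv (deriv u) t - (2 * α1 - 1) * u t - α0) *
            (t ^ 2 * deriv (deriv u) t + (2 * α1 - 1) * u t + α0) /
              (2 * t ^ 4 * deriv u t)
          - 4 * deriv u t * (u t + t * deriv u t) / t
          + ((4 * t + (2 * α1 - 1) ^ 2) / (2 * t ^ 2)) * deriv u t
          - (2 / t) * deriv (deriv u) t) :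
    SysS α0 α1 U u (deriv u)
      (fun t => (deriv (deriv u) t - ((2 * α1 - 1) * u t + α0) / t ^ 2) / deriv u t) := by
  intro t ht
  have ht0 : t ≠ 0 := fun h => h0 (h ▸ ht)
  have h1 := (hu1 t ht).hasDerivAt
  have h2 := (hu2 t ht).hasDerivAt
  have h3 := (hu3 t ht).hasDerivAt
  refine ⟨h1, h2.congr_deriv ?_, ?_⟩
  · field_simp [hne t ht]
    ring
  · have hz := (h3.sub (((h1.const_mul (2 * α1 - 1)).add_const α0).div_sq ht0)).div h2 (hne t ht)
    exact hz.congr_deriv (sysS_z_rhs_of_eqE ht0 (hne t ht) (hE t ht) rfl)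

/-- If `u` is three times differentiable with `u' ≠ 0` and satisfies equation (E)
on `U`, then `(x, y, z) = (u, u', (u'' − ((2α1−1)u + α0)/t²)/u')` satisfies
system (S) on `U` with parameters `(α0, α1)`. -/
theorem eqE_to_sysS
    (α0 α1 : ℂ) (U : Set ℂ) (hU : IsOpen U) (h0 : (0 : ℂ) ∉ U)
    (u : ℂ → ℂ)
    (hu1 : ∀ t ∈ U, DifferentiableAt ℂ u t)
    (hu2 : ∀ t ∈ U, DifferentiableAt ℂ (deriv u) t)
    (hu3 : ∀ t ∈ U, DifferentiableAt ℂ (deriv (deriv u)) t)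
    (hne : ∀ t ∈ U, deriv u t ≠ 0)
    (hE : ∀ t ∈ U,
      deriv (deriv (deriv u)) t =
        (t ^ 2 * deriv (deriv u) t - (2 * α1 - 1) * u t - α0) *
            (t ^ 2 * deriv (deriv u) t + (2 * α1 - 1) * u t + α0) /
              (2 * t ^ 4 * deriv u t)
          - 4 * deriv u t * (u t + t * deriv u t) / t
          + ((4 * t + (2 * α1 - 1) ^ 2) / (2 * t ^ 2)) * deriv u t
          - (2 / t) * deriv (deriv u) t) :
    SysS α0 α1 U u (deriv u)
      (fun t => (deriv (deriv u) t - ((2 * α1 - 1) * u t + α0) / t ^ 2) / deriv u t) :=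
  eqE_to_sysS_general α0 α1 U h0 u hu1 hu2 hu3 hne hE
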